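/- Let ℓ : ℝ³ and suppose I = ℓᵀ n and ∇I = ℓᵀ Dn with Dn = U W K Wᵀ Σ Vᵀ (of full column rank 2) and n the unit normal completing U to an orthonormal basis of ℝ³. Then ℓ = I·n + (Dn⁺)ᵀ ∇I, i.e., the light source is exactly recoverable from the intensity, the image gradient, the normal, and the derivative of the normal. -/
import Mathlib


open Matrix

theorem light_source_recovery
    (n ℓ : Fin 3 → ℝ) (hn : n ⬝ᵥ n = 1)
    (U : Matrix (Fin 3) (Fin 2) ℝ) (hU : Uᵀ * U = 1) (hUn : Uᵀ *ᵥ n = 0)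
    (hbasis : U * Uᵀ + vecMulVec n n = 1)
    (W V K Sg : Matrix (Fin 2) (Fin 2) ℝ)
    (hW : Wᵀ * W = 1) (hV : Vᵀ * V = 1)
    (hK : ∃ d, K = Matrix.diagonal d) (hKinv : IsUnit K.det)
    (hSg : ∃ d, Sg = Matrix.diagonal d) (hSginv : IsUnit Sg.det)
    (Dn : Matrix (Fin 3) (Fin 2) ℝ) (hDn : Dn = U * W * K * Wᵀ * Sg * Vᵀ)
    (Dnp : Matrix (Fin 2) (Fin 3) ℝ) (hDnp : Dnp = V * Sg⁻¹ * W * K⁻¹ * Wᵀ * Uᵀ)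
    (I : ℝ) (hI : I = ℓ ⬝ᵥ n)
    (gradI : Fin 2 → ℝ) (hgrad : gradI = ℓ ᵥ* Dn) :
    ℓ = I • n + Dnpᵀ *ᵥ gradI := by
  have hWW : W * Wᵀ = 1 := mul_eq_one_comm.mp hW
  have hKK : K * K⁻¹ = 1 := Matrix.mul_nonsing_inv K hKinv
  have hSS : Sg * Sg⁻¹ = 1 := Matrix.mul_nonsing_inv Sg hSginv
  have h1 : Dn * Dnp = U * Uᵀ := by
    subst hDn hDnp
    simp only [Matrix.mul_assoc]
    rw [← Matrix.mul_assoc Vᵀ V, hV, Matrix.one_mul,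
        ← Matrix.mul_assoc Sg Sg⁻¹, hSS, Matrix.one_mul,
        ← Matrix.mul_assoc Wᵀ W, hW, Matrix.one_mul,
        ← Matrix.mul_assoc K K⁻¹, hKK, Matrix.one_mul,
        ← Matrix.mul_assoc W Wᵀ, hWW, Matrix.one_mul]
  have h2 : Dnpᵀ *ᵥ gradI = ℓ ᵥ* (Dn * Dnp) := by
    rw [hgrad, Matrix.mulVec_transpose, Matrix.vecMul_vecMul]
  have h3 : I • n = ℓ ᵥ* vecMulVec n n := by
    funext i
    simp [Matrix.vecMul, Matrix.vecMulVec_apply, dotProduct, hI,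
      Finset.sum_mul, mul_comm, mul_assoc, mul_left_comm, Finset.mul_sum]
  rw [h2, h1, h3, ← Matrix.vecMul_add, add_comm, hbasis, Matrix.vecMul_one]
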